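/- Let {X_j}_{j≥1} be a strictly stationary sequence of square-integrable real random variables and set c_j = Cov(X_1, X_j) for j ≥ 2. Then for all integers m, N ≥ 1, with n = m·N: (1/2)·( Var(S_n) − m·Var(S_N) ) = Σ_{j=2}^{N} (m−1)(j−1) c_j + Σ_{j=N+1}^{n} (n−j+1) c_j. If moreover c_j ≥ 0 for all j ≥ 2 (as holds when the sequence is associated), then (1/2)·( Var(S_n) − m·Var(S_N) ) ≤ (n/N) · Σ_{i=1}^{N} Σ_{j=i+1}^{n} c_j. -/

import Mathlib

/-!
By stationarity `Cov(X_i, X_j) = c_{|i-j|+1}` (with `c_1 = Var X_1`), so counting the pairs at each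
distance gives `Var S_q = q c_1 + 2 ∑_{j=2}^{q} (q - j + 1) c_j`. Subtracting `m` times this identity
for `q = N` from the one for `q = mN` leaves the weight `(m - 1)(j - 1)` on `c_j` for `j ≤ N` and
`mN - j + 1` for `j > N`. Exchanging the order of summation, the right-hand side of the bound puts
the weight `m · min(j - 1, N)` on `c_j`, which dominates both.
-/

open MeasureTheory Filter Topology

noncomputable section

namespace Paper

variable {Ω : Type*} [MeasurableSpace Ω]

/-- Partial sum `S_n = X_1 + … + X_n` (1-based indexing). -/
def partialSum (X : ℕ → Ω → ℝ) (n : ℕ) (ω : Ω) : ℝ := ∑ j ∈ Finset.Icc 1 n, X j ω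

/-- The law of the random vector `(X_1, …, X_N)`. -/
def lawVec (P : Measure Ω) (X : ℕ → Ω → ℝ) (N : ℕ) : Measure (Fin N → ℝ) :=
  P.map (fun ω (i : Fin N) => X (1 + (i : ℕ)) ω)

/-- Strict stationarity: `(X_{1+k},…,X_{N+k}) ~ (X_1,…,X_N)` for all `k, N`. -/
def StrictlyStationary (P : Measure Ω) (X : ℕ → Ω → ℝ) : Prop :=
  ∀ k N : ℕ, P.map (fun ω (i : Fin N) => X (1 + k + (i : ℕ)) ω) = lawVec P X N

/-- Covariance (as a formula `E[fg] − E[f]E[g]`). -/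
def cov (P : Measure Ω) (f g : Ω → ℝ) : ℝ :=
  (∫ ω, f ω * g ω ∂P) - (∫ ω, f ω ∂P) * (∫ ω, g ω ∂P)

/-- Bounded measurable functions that are non-decreasing in each coordinate. -/
def BddMono {n : ℕ} (f : (Fin n → ℝ) → ℝ) : Prop :=
  Measurable f ∧ (∃ C, ∀ x, |f x| ≤ C) ∧
    ∀ x y : Fin n → ℝ, (∀ i, x i ≤ y i) → f x ≤ f y

/-- Association of a finite random vector. -/
def AssociatedVec (P : Measure Ω) {n : ℕ} (V : Ω → Fin n → ℝ) : Prop :=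
  ∀ f g : (Fin n → ℝ) → ℝ, BddMono f → BddMono g →
    0 ≤ cov P (fun ω => f (V ω)) (fun ω => g (V ω))

/-- Association of a sequence: every finite subcollection is associated. -/
def AssociatedSeq (P : Measure Ω) (X : ℕ → Ω → ℝ) : Prop :=
  ∀ (n : ℕ) (idx : Fin n → ℕ), (∀ i, 1 ≤ idx i) → StrictMono idx →
    AssociatedVec P (fun ω i => X (idx i) ω)

/-- Association of a pair of random variables. -/
def AssociatedPair (P : Measure Ω) (Y Z : Ω → ℝ) : Prop :=
  AssociatedVec P (fun ω => ![Y ω, Z ω])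

/-- Convolution of two measures on an additive monoid. -/
def mconv {E : Type*} [MeasurableSpace E] [Add E] (μ ν : Measure E) : Measure E :=
  (μ.prod ν).map (fun p => p.1 + p.2)

/-- `μ` is an `α`-stable law: `a X' + b X'' ~ (a^α+b^α)^{1/α} X + d`. -/
def IsStableLaw {E : Type*} [MeasurableSpace E] [AddCommGroup E] [Module ℝ E]
    (α : ℝ) (μ : Measure E) : Prop :=
  ∀ a b : ℝ, 0 < a → 0 < b → ∃ d : E,
    mconv (μ.map (fun x => a • x)) (μ.map (fun x => b • x))
      = μ.map (fun x => (a ^ α + b ^ α) ^ (1 / α) • x + d)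

/-- `μ` is a strictly `α`-stable law. -/
def IsStrictlyStableLaw {E : Type*} [MeasurableSpace E] [AddCommGroup E] [Module ℝ E]
    (α : ℝ) (μ : Measure E) : Prop :=
  ∀ a b : ℝ, 0 < a → 0 < b →
    mconv (μ.map (fun x => a • x)) (μ.map (fun x => b • x))
      = μ.map (fun x => (a ^ α + b ^ α) ^ (1 / α) • x)

/-- A sequence is jointly `α`-stable if all finite-dimensional laws are `α`-stable. -/
def JointlyStable (P : Measure Ω) (X : ℕ → Ω → ℝ) (α : ℝ) : Prop :=
  ∀ N : ℕ, IsStableLaw α (lawVec P X N)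

/-- Convergence in distribution, via bounded continuous test functions. -/
def TendstoInDistribution {E : Type*} [MeasurableSpace E] [TopologicalSpace E]
    (P : Measure Ω) (Y : ℕ → Ω → E) (μ : Measure E) : Prop :=
  ∀ f : BoundedContinuousFunction E ℝ,
    Tendsto (fun n => ∫ ω, f (Y n ω) ∂P) atTop (𝓝 (∫ x, f x ∂μ))

/-- The truncation `f_a`. -/
def trunc (a x : ℝ) : ℝ := max (-a) (min a x)

/-- Regular variation at `+∞` with index `ρ`. -/
def RegularlyVarying (g : ℝ → ℝ) (ρ : ℝ) : Prop :=
  (∀ᶠ x in atTop, 0 < g x) ∧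
    ∀ c : ℝ, 0 < c → Tendsto (fun x => g (c * x) / g x) atTop (𝓝 (c ^ ρ))

/-- The Hoeffding function `H_{(Y,Z)}(x,y) = P(Y≤x, Z≤y) − P(Y≤x)P(Z≤y)`. -/
def Hfun (P : Measure Ω) (Y Z : Ω → ℝ) (x y : ℝ) : ℝ :=
  (P {ω | Y ω ≤ x ∧ Z ω ≤ y}).toReal -
    (P {ω | Y ω ≤ x}).toReal * (P {ω | Z ω ≤ y}).toReal

/-- A Lévy measure: no mass at `0` and `∫ min(‖x‖²,1) dν < ∞`. -/
def IsLevyMeasure {E : Type*} [MeasurableSpace E] [NormedAddCommGroup E]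
    (ν : Measure E) : Prop :=
  ν {0} = 0 ∧ (∫⁻ x, ENNReal.ofReal (min (‖x‖ ^ 2) 1) ∂ν) < ⊤

/-- `n E[h(V_n)] → ∫ h dν` for bounded continuous `h` vanishing near `0`. -/
def SmallVagueTendsto {E : Type*} [MeasurableSpace E] [NormedAddCommGroup E]
    (P : Measure Ω) (V : ℕ → Ω → E) (ν : Measure E) : Prop :=
  ∀ h : E → ℝ, Continuous h → (∃ C, ∀ x, |h x| ≤ C) →
    (∃ ε > 0, ∀ x, ‖x‖ < ε → h x = 0) →
    Tendsto (fun n : ℕ => (n : ℝ) * ∫ ω, h (V n ω) ∂P) atTop (𝓝 (∫ x, h x ∂ν))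

/-- Standing assumptions (A1)–(A4). -/
structure Standing (P : Measure Ω) (X : ℕ → Ω → ℝ) (α : ℝ) (B : ℕ → ℝ)
    (ν : (N : ℕ) → Measure (Fin N → ℝ)) : Prop where
  meas : ∀ j, Measurable (X j)
  alpha_pos : 0 < α
  alpha_lt_two : α < 2
  tail : ∃ ℓ : ℝ → ℝ, RegularlyVarying ℓ 0 ∧
    ∀ x : ℝ, 0 < x → (P {ω | x < |X 1 ω|}).toReal = x ^ (-α) * ℓ x
  B_pos : ∀ n, 0 < B n
  B_norm : Tendsto (fun n : ℕ => (n : ℝ) * (P {ω | B n < |X 1 ω|}).toReal) atTop (𝓝 1)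
  levy : ∀ N, IsLevyMeasure (ν N)
  vague : ∀ N : ℕ, SmallVagueTendsto P (fun n ω (i : Fin N) => X (1 + (i : ℕ)) ω / B n) (ν N)
  symm : α = 1 → ∀ N, lawVec P X N = P.map (fun ω (i : Fin N) => -X (1 + (i : ℕ)) ω)
  mean_zero : 1 < α → Integrable (X 1) P ∧ (∫ ω, X 1 ω ∂P) = 0

/-- The limit measures `ν_{{1,j}}` for the pairs `(X_1, X_j)`. -/
def PairLevy (P : Measure Ω) (X : ℕ → Ω → ℝ) (B : ℕ → ℝ)
    (ν2 : ℕ → Measure (ℝ × ℝ)) : Prop :=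
  ∀ j : ℕ, 2 ≤ j → IsLevyMeasure (ν2 j) ∧
    SmallVagueTendsto P (fun n ω => (X 1 ω / B n, X j ω / B n)) (ν2 j)

/-- Assumption (A5). -/
def SumCovAssumption (P : Measure Ω) (X : ℕ → Ω → ℝ) (B : ℕ → ℝ)
    (ν2 : ℕ → Measure (ℝ × ℝ)) : Prop :=
  (∀ a : ℝ, 0 < a → Summable (fun j : ℕ =>
      cov P (fun ω => trunc a (X 1 ω)) (fun ω => trunc a (X (j + 2) ω)))) ∧
  (∃ ρ : ℝ, RegularlyVarying (fun a => ∑' j : ℕ,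
      cov P (fun ω => trunc a (X 1 ω)) (fun ω => trunc a (X (j + 2) ω))) ρ) ∧
  Summable (fun j : ℕ => ∫ p : ℝ × ℝ, trunc 1 p.1 * trunc 1 p.2 ∂(ν2 (j + 2))) ∧
  Tendsto (fun n : ℕ => (n : ℝ) * ∑' j : ℕ,
      cov P (fun ω => trunc 1 (X 1 ω / B n)) (fun ω => trunc 1 (X (j + 2) ω / B n)))
    atTop (𝓝 (∑' j : ℕ, ∫ p : ℝ × ℝ, trunc 1 p.1 * trunc 1 p.2 ∂(ν2 (j + 2))))



open ProbabilityTheory Finset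

lemma sum_Icc_sum_Icc_dist {R : Type*} [CommRing R] (c : ℕ → R) (q : ℕ) :
    ∑ i ∈ Icc 1 q, ∑ j ∈ Icc 1 q, c (Nat.dist i j + 1)
      = q * c 1 + 2 * ∑ j ∈ Icc 2 q, ((q : R) - j + 1) * c j := by
  induction q with
  | zero => simp
  | succ q ih =>
    have hreflect : ∑ i ∈ Icc 1 q, c (Nat.dist i (q + 1) + 1) = ∑ j ∈ Icc 2 (q + 1), c j := by
      refine sum_nbij' (fun i => q + 2 - i) (fun j => q + 2 - j) ?_ ?_ ?_ ?_ ?_ <;>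
        intro i hi <;> rw [mem_Icc] at hi
      all_goals first
        | omega
        | (rw [mem_Icc]; omega)
        | (rw [Nat.dist_eq_sub_of_le (by omega)]; congr 1; omega)
    have htop : ∑ j ∈ Icc 2 (q + 1), ((q : R) - j + 1) * c j
        = ∑ j ∈ Icc 2 q, ((q : R) - j + 1) * c j := by
      rcases Nat.eq_zero_or_pos q with rfl | hq
      · simp
      · rw [sum_Icc_succ_top (by omega)]
        push_cast
        ring
    have hweights : ∑ j ∈ Icc 2 (q + 1), (((q + 1 : ℕ) : R) - j + 1) * c j
        = ∑ j ∈ Icc 2 (q + 1), ((q : R) - j + 1) * c j + ∑ j ∈ Icc 2 (q + 1), c j := by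
      rw [← sum_add_distrib]
      exact sum_congr rfl fun j _ => by push_cast; ring
    simp only [sum_Icc_succ_top (show 1 ≤ q + 1 by omega), sum_add_distrib, ih, hreflect,
      Nat.dist_self, Nat.dist_comm (q + 1)]
    rw [hweights, htop]
    push_cast
    ring

lemma sum_Icc_two_eq_add {M : Type*} [AddCommMonoid M] (f : ℕ → M) {N n : ℕ} (hN : 1 ≤ N)
    (hNn : N ≤ n) :
    ∑ j ∈ Icc 2 n, f j = ∑ j ∈ Icc 2 N, f j + ∑ j ∈ Icc (N + 1) n, f j := by
  simp only [show (2 : ℕ) = 1 + 1 from rfl, Icc_add_one_left_eq_Ioc]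
  exact (sum_Ioc_consecutive f hN hNn).symm

lemma sum_Icc_sum_Icc_add_one {M : Type*} [AddCommMonoid M] (c : ℕ → M) (N n : ℕ) :
    ∑ i ∈ Icc 1 N, ∑ j ∈ Icc (i + 1) n, c j = ∑ j ∈ Icc 2 n, min (j - 1) N • c j := by
  rw [sum_comm' (t' := Icc 2 n) (s' := fun j => Icc 1 (min (j - 1) N))]
  · simp only [sum_const, Nat.card_Icc, Nat.add_sub_cancel]
  · intro i j
    simp only [mem_Icc]
    omega

lemma weighted_sum_sub_eq {R : Type*} [CommRing R] (c : ℕ → R) {m N : ℕ} (hm : 1 ≤ m)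
    (hN : 1 ≤ N) :
    ∑ j ∈ Icc 2 (m * N), (((m * N : ℕ) : R) - j + 1) * c j
        - m * ∑ j ∈ Icc 2 N, ((N : R) - j + 1) * c j
      = ∑ j ∈ Icc 2 N, ((m : R) - 1) * ((j : R) - 1) * c j
        + ∑ j ∈ Icc (N + 1) (m * N), (((m * N : ℕ) : R) - j + 1) * c j := by
  rw [sum_Icc_two_eq_add _ hN (Nat.le_mul_of_pos_left N hm), mul_sum, add_sub_right_comm,
    ← sum_sub_distrib]
  congr 1
  exact sum_congr rfl fun j _ => by push_cast; ring

lemma weighted_sum_le {R : Type*} [CommRing R] [LinearOrder R] [IsStrictOrderedRing R]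
    (c : ℕ → R) (hc : ∀ j, 2 ≤ j → 0 ≤ c j) {m N : ℕ} (hm : 1 ≤ m) (hN : 1 ≤ N) :
    ∑ j ∈ Icc 2 N, ((m : R) - 1) * ((j : R) - 1) * c j
        + ∑ j ∈ Icc (N + 1) (m * N), (((m * N : ℕ) : R) - j + 1) * c j
      ≤ m * ∑ i ∈ Icc 1 N, ∑ j ∈ Icc (i + 1) (m * N), c j := by
  rw [sum_Icc_sum_Icc_add_one, sum_Icc_two_eq_add _ hN (Nat.le_mul_of_pos_left N hm), mul_add,
    mul_sum, mul_sum]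
  refine add_le_add (sum_le_sum fun j hj => ?_) (sum_le_sum fun j hj => ?_) <;> rw [mem_Icc] at hj
  · have hjc : 0 ≤ ((j : R) - 1) * c j :=
      mul_nonneg (sub_nonneg.2 (by exact_mod_cast (by omega : 1 ≤ j))) (hc j hj.1)
    rw [min_eq_left (by omega), nsmul_eq_mul, Nat.cast_sub (by omega), Nat.cast_one]
    linear_combination hjc
  · have hjc : 0 ≤ ((j : R) - 1) * c j :=
      mul_nonneg (sub_nonneg.2 (by exact_mod_cast (by omega : 1 ≤ j))) (hc j (by omega))
    rw [min_eq_right (by omega), nsmul_eq_mul, Nat.cast_mul]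
    linear_combination hjc

section Covariance

variable {P : Measure Ω} {X : ℕ → Ω → ℝ}

lemma cov_eq_covariance [IsProbabilityMeasure P] {f g : Ω → ℝ} (hf : MemLp f 2 P)
    (hg : MemLp g 2 P) : cov P f g = cov[f, g; P] :=
  (covariance_eq_sub hf hg).symm

lemma StrictlyStationary.covariance_shift (hstat : StrictlyStationary P X)
    (hX : ∀ j, AEMeasurable (X j) P) (k a b : ℕ) :
    cov[X (1 + k + a), X (1 + k + b); P] = cov[X (1 + a), X (1 + b); P] := by
  let M := max a b + 1
  let ia : Fin M := ⟨a, by omega⟩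
  let ib : Fin M := ⟨b, by omega⟩
  have hcoord (i : Fin M) (μ : Measure (Fin M → ℝ)) : AEStronglyMeasurable (fun v => v i) μ :=
    (continuous_apply i).aestronglyMeasurable
  have hblock (k' : ℕ) : AEMeasurable (fun ω (i : Fin M) => X (1 + k' + i) ω) P :=
    aemeasurable_pi_lambda _ fun _ => hX _
  calc cov[X (1 + k + a), X (1 + k + b); P]
      = cov[fun v => v ia, fun v => v ib; P.map (fun ω (i : Fin M) => X (1 + k + i) ω)] :=
        (covariance_map_fun (hcoord ia _) (hcoord ib _) (hblock k)).symm
    _ = cov[X (1 + 0 + a), X (1 + 0 + b); P] := by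
        rw [hstat k M, ← hstat 0 M]
        exact covariance_map_fun (hcoord ia _) (hcoord ib _) (hblock 0)

lemma StrictlyStationary.covariance_eq_dist (hstat : StrictlyStationary P X)
    (hX : ∀ j, AEMeasurable (X j) P) {i j : ℕ} (hi : 1 ≤ i) (hj : 1 ≤ j) :
    cov[X i, X j; P] = cov[X 1, X (Nat.dist i j + 1); P] := by
  wlog hij : i ≤ j generalizing i j
  · rw [covariance_comm, Nat.dist_comm]
    exact this hj hi (by omega)
  have h := hstat.covariance_shift hX (i - 1) 0 (j - i)
  rw [Nat.dist_eq_sub_of_le hij]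
  convert h using 3 <;> omega

variable [IsProbabilityMeasure P]

lemma StrictlyStationary.cov_partialSum_self (hstat : StrictlyStationary P X)
    (hL2 : ∀ j, MemLp (X j) 2 P) (q : ℕ) :
    cov P (partialSum X q) (partialSum X q)
      = q * cov P (X 1) (X 1) + 2 * ∑ j ∈ Icc 2 q, ((q : ℝ) - j + 1) * cov P (X 1) (X j) := by
  have hS : MemLp (partialSum X q) 2 P := memLp_finsetSum _ fun j _ => hL2 j
  have hX : ∀ j, AEMeasurable (X j) P := fun j => (hL2 j).aestronglyMeasurable.aemeasurable
  simp only [cov_eq_covariance hS hS, cov_eq_covariance (hL2 _) (hL2 _)]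
  rw [show partialSum X q = fun ω => ∑ j ∈ Icc 1 q, X j ω from rfl,
    covariance_fun_sum_fun_sum' (fun j _ => hL2 j) (fun j _ => hL2 j)]
  refine .trans (sum_congr rfl fun i hi => sum_congr rfl fun j hj => ?_)
    (sum_Icc_sum_Icc_dist (fun j => cov[X 1, X j; P]) q)
  exact hstat.covariance_eq_dist hX (mem_Icc.1 hi).1 (mem_Icc.1 hj).1

lemma StrictlyStationary.half_cov_partialSum_mul_sub (hstat : StrictlyStationary P X)
    (hL2 : ∀ j, MemLp (X j) 2 P) {m N : ℕ} (hm : 1 ≤ m) (hN : 1 ≤ N) :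
    (1 / 2 : ℝ) *
        (cov P (partialSum X (m * N)) (partialSum X (m * N))
          - m * cov P (partialSum X N) (partialSum X N))
      = (∑ j ∈ Icc 2 N, ((m : ℝ) - 1) * ((j : ℝ) - 1) * cov P (X 1) (X j))
        + ∑ j ∈ Icc (N + 1) (m * N), (((m * N : ℕ) : ℝ) - j + 1) * cov P (X 1) (X j) := by
  rw [hstat.cov_partialSum_self hL2, hstat.cov_partialSum_self hL2,
    ← weighted_sum_sub_eq _ hm hN]
  push_cast
  ring

end Covariance

theorem statement13_general {Ω : Type*} [MeasurableSpace Ω] (P : Measure Ω) [IsProbabilityMeasure P]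
    (X : ℕ → Ω → ℝ)
    (hL2 : ∀ j, MemLp (X j) 2 P)
    (hstat : StrictlyStationary P X)
    (m N : ℕ) (hm : 1 ≤ m) (hN : 1 ≤ N) :
    (1 / 2 : ℝ) *
        (cov P (partialSum X (m * N)) (partialSum X (m * N))
          - m * cov P (partialSum X N) (partialSum X N))
      = (∑ j ∈ Finset.Icc 2 N, ((m : ℝ) - 1) * ((j : ℝ) - 1) * cov P (X 1) (X j))
        + ∑ j ∈ Finset.Icc (N + 1) (m * N),
            (((m * N : ℕ) : ℝ) - (j : ℝ) + 1) * cov P (X 1) (X j) ∧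
    ((∀ j : ℕ, 2 ≤ j → 0 ≤ cov P (X 1) (X j)) →
      (1 / 2 : ℝ) *
          (cov P (partialSum X (m * N)) (partialSum X (m * N))
            - m * cov P (partialSum X N) (partialSum X N))
        ≤ ((m * N : ℕ) : ℝ) / (N : ℝ) *
            ∑ i ∈ Finset.Icc 1 N, ∑ j ∈ Finset.Icc (i + 1) (m * N), cov P (X 1) (X j)) := by
  refine ⟨hstat.half_cov_partialSum_mul_sub hL2 hm hN, fun hc => ?_⟩
  have hratio : ((m * N : ℕ) : ℝ) / N = m := by
    rw [Nat.cast_mul, mul_div_cancel_right₀ _ (by positivity)]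
  rw [hstat.half_cov_partialSum_mul_sub hL2 hm hN, hratio]
  exact weighted_sum_le _ hc hm hN

/-- the variance decomposition
`(1/2)(Var S_n − m Var S_N) = Σ_{j=2}^{N}(m−1)(j−1)c_j + Σ_{j=N+1}^{n}(n−j+1)c_j` for
`n = mN`, and the resulting bound `≤ (n/N) Σ_{i=1}^{N} Σ_{j=i+1}^{n} c_j` when `c_j ≥ 0`. -/
theorem statement13 {Ω : Type*} [MeasurableSpace Ω] (P : Measure Ω) [IsProbabilityMeasure P]
    (X : ℕ → Ω → ℝ) (hmeas : ∀ j, Measurable (X j))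
    (hL2 : ∀ j, MemLp (X j) 2 P)
    (hstat : StrictlyStationary P X)
    (m N : ℕ) (hm : 1 ≤ m) (hN : 1 ≤ N) :
    (1 / 2 : ℝ) *
        (cov P (partialSum X (m * N)) (partialSum X (m * N))
          - m * cov P (partialSum X N) (partialSum X N))
      = (∑ j ∈ Finset.Icc 2 N, ((m : ℝ) - 1) * ((j : ℝ) - 1) * cov P (X 1) (X j))
        + ∑ j ∈ Finset.Icc (N + 1) (m * N),
            (((m * N : ℕ) : ℝ) - (j : ℝ) + 1) * cov P (X 1) (X j) ∧
    ((∀ j : ℕ, 2 ≤ j → 0 ≤ cov P (X 1) (X j)) →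
      (1 / 2 : ℝ) *
          (cov P (partialSum X (m * N)) (partialSum X (m * N))
            - m * cov P (partialSum X N) (partialSum X N))
        ≤ ((m * N : ℕ) : ℝ) / (N : ℝ) *
            ∑ i ∈ Finset.Icc 1 N, ∑ j ∈ Finset.Icc (i + 1) (m * N), cov P (X 1) (X j)) :=
  statement13_general P X hL2 hstat m N hm hN

end Paper
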